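/- arXiv:1906.10005 — 3 statements merged into one kernel-verified Lean document; each statement's English description precedes it below -/
import Mathlib

section
/- Fixed-point characterization of AU in QCTL: for any QCTL formulas φ and ψ, and any atomic proposition z occurring in neither φ nor ψ, the formula A φ U ψ is equivalent to ∀z.( AG( z ↔ (ψ ∨ (φ ∧ AX z)) ) → z ). -/
open Classical

/-- Syntax of QCTL: `φ ::= q | ¬φ | φ∨ψ | EX φ | E φ U ψ | A φ U ψ | ∃p.φ`. -/
inductive QCTL (AP : Type) : Type where
  | atom : AP → QCTL AP
  | qneg : QCTL AP → QCTL AP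
  | qor  : QCTL AP → QCTL AP → QCTL AP
  | qEX  : QCTL AP → QCTL AP
  | qEU  : QCTL AP → QCTL AP → QCTL AP
  | qAU  : QCTL AP → QCTL AP → QCTL AP
  | qexi : AP → QCTL AP → QCTL AP

/-- A Kripke structure over atomic propositions `AP` with (finite) state space `V`:
a serial edge relation and a labelling function. -/
structure Kripke (AP V : Type) where
  E : V → V → Prop
  serial : ∀ v, ∃ w, E v w
  label : V → Set AP

variable {AP V : Type}

/-- `K'` agrees with `K` (same edges) except possibly on the labelling of `p`. -/
def Kripke.AgreeExcept (K K' : Kripke AP V) (p : AP) : Prop :=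
  K'.E = K.E ∧ ∀ v q, q ≠ p → (q ∈ K'.label v ↔ q ∈ K.label v)

/-- Structure semantics of QCTL. -/
def QCTL.sat : QCTL AP → Kripke AP V → V → Prop
  | .atom p, K, x => p ∈ K.label x
  | .qneg φ, K, x => ¬ φ.sat K x
  | .qor φ ψ, K, x => φ.sat K x ∨ ψ.sat K x
  | .qEX φ, K, x => ∃ y, K.E x y ∧ φ.sat K y
  | .qEU φ ψ, K, x => ∃ ρ : ℕ → V, ρ 0 = x ∧ (∀ i, K.E (ρ i) (ρ (i + 1))) ∧
      ∃ i, ψ.sat K (ρ i) ∧ ∀ j < i, φ.sat K (ρ j)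
  | .qAU φ ψ, K, x => ∀ ρ : ℕ → V, ρ 0 = x → (∀ i, K.E (ρ i) (ρ (i + 1))) →
      ∃ i, ψ.sat K (ρ i) ∧ ∀ j < i, φ.sat K (ρ j)
  | .qexi p φ, K, x => ∃ K' : Kripke AP V, K.AgreeExcept K' p ∧ φ.sat K' x

namespace QCTL

def qand (φ ψ : QCTL AP) : QCTL AP := qneg (qor (qneg φ) (qneg ψ))
def qimp (φ ψ : QCTL AP) : QCTL AP := qor (qneg φ) ψ
def qiff (φ ψ : QCTL AP) : QCTL AP := qand (qimp φ ψ) (qimp ψ φ)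
def qtop [Inhabited AP] : QCTL AP := qor (atom default) (qneg (atom default))
def qbot [Inhabited AP] : QCTL AP := qneg qtop
def qAX (φ : QCTL AP) : QCTL AP := qneg (qEX (qneg φ))
def qEF [Inhabited AP] (φ : QCTL AP) : QCTL AP := qEU qtop φ
def qAG [Inhabited AP] (φ : QCTL AP) : QCTL AP := qneg (qEF (qneg φ))
def qall (p : AP) (φ : QCTL AP) : QCTL AP := qneg (qexi p (qneg φ))

/-- All atomic propositions occurring in a formula (free or bound). -/
def atoms : QCTL AP → Set AP
  | atom p => {p}
  | qneg φ => φ.atoms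
  | qor φ ψ => φ.atoms ∪ ψ.atoms
  | qEX φ => φ.atoms
  | qEU φ ψ => φ.atoms ∪ ψ.atoms
  | qAU φ ψ => φ.atoms ∪ ψ.atoms
  | qexi p φ => insert p φ.atoms

/-- Size of a formula. -/
def qsize : QCTL AP → ℕ
  | atom _ => 1
  | qneg φ => φ.qsize + 1
  | qor φ ψ => φ.qsize + ψ.qsize + 1
  | qEX φ => φ.qsize + 1
  | qEU φ ψ => φ.qsize + ψ.qsize + 1
  | qAU φ ψ => φ.qsize + ψ.qsize + 1
  | qexi _ φ => φ.qsize + 1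

end QCTL

/-- Equivalence of two QCTL formulas: same truth value at every state of every
(finite) Kripke structure. -/
def QEquiv (φ ψ : QCTL AP) : Prop :=
  ∀ (V : Type) [Fintype V] (K : Kripke AP V) (x : V), φ.sat K x ↔ ψ.sat K x

section Aux
variable {AP V : Type}
open QCTL

lemma agree_symm {K K' : Kripke AP V} {p : AP} (h : K.AgreeExcept K' p) :
    K'.AgreeExcept K p :=
  ⟨h.1.symm, fun v q hq => (h.2 v q hq).symm⟩

lemma sat_agree {z : AP} :
    ∀ (χ : QCTL AP), z ∉ χ.atoms → ∀ (K K' : Kripke AP V),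
      K.AgreeExcept K' z → ∀ x, χ.sat K x ↔ χ.sat K' x := by
  intro χ
  induction χ with
  | atom p =>
    intro hz K K' h x
    simp only [QCTL.atoms, Set.mem_singleton_iff] at hz
    exact (h.2 x p (fun hp => hz hp.symm)).symm
  | qneg φ ih =>
    intro hz K K' h x
    exact not_congr (ih hz K K' h x)
  | qor φ ψ ihφ ihψ =>
    intro hz K K' h x
    simp only [QCTL.atoms, Set.mem_union, not_or] at hz
    exact or_congr (ihφ hz.1 K K' h x) (ihψ hz.2 K K' h x)
  | qEX φ ih =>
    intro hz K K' h x
    simp only [QCTL.sat, h.1]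
    exact exists_congr fun y => and_congr_right fun _ => ih hz K K' h y
  | qEU φ ψ ihφ ihψ =>
    intro hz K K' h x
    simp only [QCTL.atoms, Set.mem_union, not_or] at hz
    simp only [QCTL.sat, h.1]
    refine exists_congr fun ρ => and_congr_right fun _ => and_congr_right fun _ => ?_
    exact exists_congr fun i => and_congr (ihψ hz.2 K K' h _)
      (forall_congr' fun j => forall_congr' fun _ => ihφ hz.1 K K' h _)
  | qAU φ ψ ihφ ihψ =>
    intro hz K K' h x
    simp only [QCTL.atoms, Set.mem_union, not_or] at hz
    simp only [QCTL.sat, h.1]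
    refine forall_congr' fun ρ => forall_congr' fun _ => forall_congr' fun _ => ?_
    exact exists_congr fun i => and_congr (ihψ hz.2 K K' h _)
      (forall_congr' fun j => forall_congr' fun _ => ihφ hz.1 K K' h _)
  | qexi p φ ih =>
    intro hz K K' h x
    simp only [QCTL.atoms, Set.mem_insert_iff, not_or] at hz
    obtain ⟨hpz, hzφ⟩ := hz
    simp only [QCTL.sat]
    constructor
    · rintro ⟨K'', hK'', hsat⟩
      refine ⟨⟨K''.E, K''.serial, fun v => {q | if q = p then q ∈ K''.label v else q ∈ K'.label v}⟩, ?_, ?_⟩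
      · refine ⟨by rw [hK''.1, h.1], fun v q hq => ?_⟩
        simp [Set.mem_setOf_eq, if_neg hq]
      · refine (ih hzφ K'' ⟨K''.E, K''.serial, fun v => {q | if q = p then q ∈ K''.label v else q ∈ K'.label v}⟩ ⟨rfl, fun v q hq => ?_⟩ x).mp hsat
        by_cases hqp : q = p
        · simp [Set.mem_setOf_eq, hqp]
        · simp only [Set.mem_setOf_eq, if_neg hqp]
          rw [h.2 v q hq, ← hK''.2 v q hqp]
    · rintro ⟨K'', hK'', hsat⟩
      refine ⟨⟨K''.E, K''.serial, fun v => {q | if q = p then q ∈ K''.label v else q ∈ K.label v}⟩, ?_, ?_⟩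
      · refine ⟨by rw [hK''.1, h.1], fun v q hq => ?_⟩
        simp [Set.mem_setOf_eq, if_neg hq]
      · refine (ih hzφ K'' ⟨K''.E, K''.serial, fun v => {q | if q = p then q ∈ K''.label v else q ∈ K.label v}⟩ ⟨rfl, fun v q hq => ?_⟩ x).mp hsat
        by_cases hqp : q = p
        · simp [Set.mem_setOf_eq, hqp]
        · simp only [Set.mem_setOf_eq, if_neg hqp]
          rw [← h.2 v q hq, ← hK''.2 v q hqp]

variable [Inhabited AP]
set_option linter.unusedSectionVars false

lemma qtop_sat (K : Kripke AP V) (x : V) : (qtop : QCTL AP).sat K x := by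
  simp only [qtop, QCTL.sat]
  exact Classical.em _

lemma qand_sat (φ ψ : QCTL AP) (K : Kripke AP V) (x : V) :
    (qand φ ψ).sat K x ↔ φ.sat K x ∧ ψ.sat K x := by
  simp only [qand, QCTL.sat]; tauto

lemma qimp_sat (φ ψ : QCTL AP) (K : Kripke AP V) (x : V) :
    (qimp φ ψ).sat K x ↔ (φ.sat K x → ψ.sat K x) := by
  simp only [qimp, QCTL.sat]; tauto

lemma qiff_sat (φ ψ : QCTL AP) (K : Kripke AP V) (x : V) :
    (qiff φ ψ).sat K x ↔ (φ.sat K x ↔ ψ.sat K x) := by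
  simp only [qiff, qand_sat, qimp_sat]; tauto

lemma qAX_sat (φ : QCTL AP) (K : Kripke AP V) (x : V) :
    (qAX φ).sat K x ↔ ∀ y, K.E x y → φ.sat K y := by
  simp only [qAX, QCTL.sat]; push_neg; rfl

lemma qAG_sat (φ : QCTL AP) (K : Kripke AP V) (x : V) :
    (qAG φ).sat K x ↔ ∀ ρ : ℕ → V, ρ 0 = x → (∀ i, K.E (ρ i) (ρ (i + 1))) →
      ∀ i, φ.sat K (ρ i) := by
  simp only [qAG, qEF, QCTL.sat]
  constructor
  · intro h ρ h0 hE i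
    by_contra hc
    exact h ⟨ρ, h0, hE, i, hc, fun j _ => qtop_sat K (ρ j)⟩
  · rintro h ⟨ρ, h0, hE, i, hc, _⟩
    exact hc (h ρ h0 hE i)

lemma qall_sat (p : AP) (φ : QCTL AP) (K : Kripke AP V) (x : V) :
    (qall p φ).sat K x ↔ ∀ K' : Kripke AP V, K.AgreeExcept K' p → φ.sat K' x := by
  simp only [qall, QCTL.sat]; push_neg; rfl

lemma qAU_unfold (φ ψ : QCTL AP) (K : Kripke AP V) (s : V) :
    (qAU φ ψ).sat K s ↔ ψ.sat K s ∨
      (φ.sat K s ∧ ∀ t, K.E s t → (qAU φ ψ).sat K t) := by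
  constructor
  · intro h
    by_cases hψ : ψ.sat K s
    · exact Or.inl hψ
    · refine Or.inr ⟨?_, ?_⟩
      · -- φ holds at s: build a canonical path from s
        obtain ⟨ρ, h0, hE⟩ : ∃ ρ : ℕ → V, ρ 0 = s ∧ ∀ i, K.E (ρ i) (ρ (i+1)) := by
          refine ⟨fun n => Nat.rec s (fun _ v => Classical.choose (K.serial v)) n, rfl, ?_⟩
          intro i
          exact Classical.choose_spec (K.serial _)
        obtain ⟨i, hψi, hφj⟩ := h ρ h0 hE
        rcases Nat.eq_zero_or_pos i with hi | hi
        · exact absurd (h0 ▸ hi ▸ hψi) hψ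
        · have := hφj 0 hi
          rwa [h0] at this
      · intro t hst σ h0 hEσ
        set ρ' : ℕ → V := fun n => Nat.rec s (fun k _ => σ k) n with hρ'
        have h1 : ∀ n, ρ' (n+1) = σ n := fun n => rfl
        have hE' : ∀ i, K.E (ρ' i) (ρ' (i+1)) := by
          intro i
          cases i with
          | zero => show K.E s (σ 0); rw [h0]; exact hst
          | succ k => show K.E (σ k) (σ (k+1)); exact hEσ k
        obtain ⟨i, hψi, hφj⟩ := h ρ' rfl hE'
        cases i with
        | zero => exact absurd hψi hψ
        | succ k =>
          refine ⟨k, by simpa [h1] using hψi, fun j hj => ?_⟩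
          have := hφj (j+1) (Nat.succ_lt_succ hj)
          simpa [h1] using this
  · rintro (hψ | ⟨hφ, hsucc⟩)
    · intro ρ h0 hE
      exact ⟨0, h0 ▸ hψ, fun j hj => absurd hj (Nat.not_lt_zero j)⟩
    · intro ρ h0 hE
      have h1 : K.E s (ρ 1) := h0 ▸ hE 0
      obtain ⟨i, hψi, hφj⟩ := hsucc (ρ 1) h1 (fun n => ρ (n+1)) rfl (fun i => hE (i+1))
      refine ⟨i+1, hψi, fun j hj => ?_⟩
      cases j with
      | zero => exact h0 ▸ hφ
      | succ k => exact hφj k (Nat.lt_of_succ_lt_succ hj)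

end Aux
/-- Fixed-point characterization of `A φ U ψ`:
`A φ U ψ  ≡  ∀z.( AG( z ↔ (ψ ∨ (φ ∧ AX z)) ) → z )`, for `z` occurring in neither `φ` nor `ψ`. -/
theorem au_fixed_point {AP : Type} [Inhabited AP] (φ ψ : QCTL AP) (z : AP)
    (hzφ : z ∉ φ.atoms) (hzψ : z ∉ ψ.atoms) :
    QEquiv (QCTL.qAU φ ψ)
      (QCTL.qall z
        (QCTL.qimp
          (QCTL.qAG (QCTL.qiff (QCTL.atom z)
            (QCTL.qor ψ (QCTL.qand φ (QCTL.qAX (QCTL.atom z))))))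
          (QCTL.atom z))) := by
  intro V _ K x
  rw [qall_sat]
  constructor
  · -- forward
    intro hAU K' hKK'
    rw [qimp_sat, qAG_sat]
    intro hAG
    show z ∈ K'.label x
    by_contra hnz
    set C : V → Prop := fun s => ∃ u, K.E s u ∧ z ∉ K'.label u with hCdef
    set next : V → V := fun s => if h : C s then h.choose else (K.serial s).choose
      with hnextdef
    have hnext_edge : ∀ s, K.E s (next s) := by
      intro s
      by_cases h : C s
      · simp only [hnextdef, dif_pos h]; exact h.choose_spec.1
      · simp only [hnextdef, dif_neg h]; exact (K.serial s).choose_spec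
    have hnext_z : ∀ s, C s → z ∉ K'.label (next s) := by
      intro s h
      simp only [hnextdef, dif_pos h]; exact h.choose_spec.2
    set ρ : ℕ → V := fun n => Nat.rec x (fun _ v => next v) n with hρdef
    have hρ0 : ρ 0 = x := rfl
    have hρs : ∀ n, ρ (n + 1) = next (ρ n) := fun n => rfl
    have hE : ∀ i, K.E (ρ i) (ρ (i + 1)) := fun i => (hρs i) ▸ hnext_edge (ρ i)
    have hE' : ∀ i, K'.E (ρ i) (ρ (i + 1)) := by
      intro i; rw [hKK'.1]; exact hE i
    have heqi : ∀ i, (z ∈ K'.label (ρ i)) ↔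
        (ψ.sat K' (ρ i) ∨ (φ.sat K' (ρ i) ∧ ∀ y, K'.E (ρ i) y → z ∈ K'.label y)) := by
      intro i
      have h := hAG ρ hρ0 hE' i
      rw [qiff_sat] at h
      have h2 : (QCTL.qor ψ (QCTL.qand φ (QCTL.qAX (QCTL.atom z)))).sat K' (ρ i) ↔
          ψ.sat K' (ρ i) ∨ (φ.sat K' (ρ i) ∧ ∀ y, K'.E (ρ i) y → z ∈ K'.label y) := by
        show (ψ.sat K' (ρ i) ∨ (QCTL.qand φ (QCTL.qAX (QCTL.atom z))).sat K' (ρ i)) ↔ _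
        rw [qand_sat, qAX_sat]
        exact Iff.rfl
      exact h.trans h2
    have claim : ∀ i, (∀ j, j < i → φ.sat K (ρ j)) → z ∉ K'.label (ρ i) := by
      intro i
      induction i with
      | zero => intro _; exact hnz
      | succ n ih =>
        intro hall
        have hzn := ih (fun j hj => hall j (hj.trans (Nat.lt_succ_self n)))
        have hφn : φ.sat K (ρ n) := hall n (Nat.lt_succ_self n)
        have hφn' : φ.sat K' (ρ n) := (sat_agree φ hzφ K K' hKK' (ρ n)).mp hφn
        have h2 : ¬ (ψ.sat K' (ρ n) ∨
            (φ.sat K' (ρ n) ∧ ∀ y, K'.E (ρ n) y → z ∈ K'.label y)) :=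
          fun hcc => hzn ((heqi n).mpr hcc)
        push_neg at h2
        obtain ⟨y, hy, hyz⟩ := h2.2 hφn'
        have hCn : C (ρ n) := ⟨y, hKK'.1 ▸ hy, hyz⟩
        rw [hρs n]
        exact hnext_z _ hCn
    obtain ⟨i, hψi, hφj⟩ := hAU ρ hρ0 hE
    exact claim i (fun j hj => hφj j hj)
      ((heqi i).mpr (Or.inl ((sat_agree ψ hzψ K K' hKK' _).mp hψi)))
  · -- backward
    intro h
    set K' : Kripke AP V :=
      ⟨K.E, K.serial, fun v => {q | if q = z then (QCTL.qAU φ ψ).sat K v else q ∈ K.label v}⟩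
      with hK'def
    have hagree : K.AgreeExcept K' z :=
      ⟨rfl, fun v q hq => by simp [hK'def, Set.mem_setOf_eq, if_neg hq]⟩
    have hz' : ∀ v, (z ∈ K'.label v) ↔ (QCTL.qAU φ ψ).sat K v := by
      intro v; simp [hK'def, Set.mem_setOf_eq]
    have hAGeq : (QCTL.qAG (QCTL.qiff (QCTL.atom z)
        (QCTL.qor ψ (QCTL.qand φ (QCTL.qAX (QCTL.atom z)))))).sat K' x := by
      rw [qAG_sat]
      intro σ h0 hEσ i
      rw [qiff_sat]
      show z ∈ K'.label (σ i) ↔ _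
      rw [hz']
      have h2 : (QCTL.qor ψ (QCTL.qand φ (QCTL.qAX (QCTL.atom z)))).sat K' (σ i) ↔
          ψ.sat K' (σ i) ∨ (φ.sat K' (σ i) ∧ ∀ y, K'.E (σ i) y → z ∈ K'.label y) := by
        show (ψ.sat K' (σ i) ∨ (QCTL.qand φ (QCTL.qAX (QCTL.atom z))).sat K' (σ i)) ↔ _
        rw [qand_sat, qAX_sat]
        exact Iff.rfl
      rw [h2, qAU_unfold φ ψ K (σ i)]
      refine or_congr (sat_agree ψ hzψ K K' hagree (σ i))
        (and_congr (sat_agree φ hzφ K K' hagree (σ i))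
          (forall_congr' fun y => imp_congr Iff.rfl (hz' y).symm))
    have h2 := h K' hagree
    rw [qimp_sat] at h2
    exact (hz' x).mp (h2 hAGeq)
end

section
/- Correctness of the fixed-point reduction (method FP): Let Φ be a QCTL formula, K = (V,E,ℓ) a Kripke structure, x ∈ V, ε : AP_Q^Φ ⇀ 2^V an environment, and φ a subformula of Φ. If the QBF formula FPC(φ)-hat^{x,dom(ε)} is defined inductively by the basic translation rules together with the rule (AG φ)-hat^{x,P} = ⋀_{(x,y)∈E*} φ̂^{y,P}, then K,x ⊨_ε φ if and only if v_ε ⊨ FPC(φ)-hat^{x,dom(ε)}. -/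
open Classical

variable {AP V : Type}

/-- Quantified Boolean formulas over variables in `W`. -/
inductive QBF (W : Type) : Type where
  | tru : QBF W
  | fls : QBF W
  | var : W → QBF W
  | bneg : QBF W → QBF W
  | bor : QBF W → QBF W → QBF W
  | band : QBF W → QBF W → QBF W
  | bexi : W → QBF W → QBF W
  | ball : W → QBF W → QBF W

namespace QBF
variable {W : Type}

def bimp (α β : QBF W) : QBF W := bor (bneg α) β

/-- Semantics of QBF over a valuation of the (free) variables. -/
def bsat : QBF W → (W → Prop) → Prop
  | tru, _ => True
  | fls, _ => False
  | var w, v => v w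
  | bneg α, v => ¬ α.bsat v
  | bor α β, v => α.bsat v ∨ β.bsat v
  | band α β, v => α.bsat v ∧ β.bsat v
  | bexi w α, v => ∃ b : Prop, α.bsat (fun w' => if w' = w then b else v w')
  | ball w α, v => ∀ b : Prop, α.bsat (fun w' => if w' = w then b else v w')

/-- Validity of a (closed) QBF formula. -/
def valid (α : QBF W) : Prop := ∀ v : W → Prop, α.bsat v

/-- Size of a QBF formula. -/
def bsize : QBF W → ℕ
  | tru => 1
  | fls => 1
  | var _ => 1
  | bneg α => α.bsize + 1
  | bor α β => α.bsize + β.bsize + 1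
  | band α β => α.bsize + β.bsize + 1
  | bexi _ α => α.bsize + 1
  | ball _ α => α.bsize + 1

/-- Finite disjunction `⋁_{y ∈ l} f y`. -/
def bigOr {γ : Type} (l : List γ) (f : γ → QBF W) : QBF W := (l.map f).foldr bor fls

/-- Finite conjunction `⋀_{y ∈ l} f y`. -/
def bigAnd {γ : Type} (l : List γ) (f : γ → QBF W) : QBF W := (l.map f).foldr band tru

end QBF

/-- The list of `E`-successors of a state. -/
noncomputable def Kripke.succList {AP V : Type} [Fintype V] (K : Kripke AP V) (x : V) :
    List V :=
  (Finset.univ.filter fun y => K.E x y).toList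

/-- The list of states reachable from `x` (along `E*`). -/
noncomputable def Kripke.reachList {AP V : Type} [Fintype V] (K : Kripke AP V) (x : V) :
    List V :=
  (Finset.univ.filter fun y => Relation.ReflTransGen K.E x y).toList

/-- The set of quantified atomic propositions of a formula. -/
def QCTL.quantAtoms {AP : Type} : QCTL AP → Set AP
  | .atom _ => ∅
  | .qneg φ => φ.quantAtoms
  | .qor φ ψ => φ.quantAtoms ∪ ψ.quantAtoms
  | .qEX φ => φ.quantAtoms
  | .qEU φ ψ => φ.quantAtoms ∪ ψ.quantAtoms
  | .qAU φ ψ => φ.quantAtoms ∪ ψ.quantAtoms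
  | .qexi p φ => insert p φ.quantAtoms

/-- The set of subformulas of a formula. -/
def QCTL.subforms {AP : Type} : QCTL AP → Set (QCTL AP)
  | .atom p => {QCTL.atom p}
  | .qneg φ => insert (QCTL.qneg φ) φ.subforms
  | .qor φ ψ => insert (QCTL.qor φ ψ) (φ.subforms ∪ ψ.subforms)
  | .qEX φ => insert (QCTL.qEX φ) φ.subforms
  | .qEU φ ψ => insert (QCTL.qEU φ ψ) (φ.subforms ∪ ψ.subforms)
  | .qAU φ ψ => insert (QCTL.qAU φ ψ) (φ.subforms ∪ ψ.subforms)
  | .qexi p φ => insert (QCTL.qexi p φ) φ.subforms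

/-- Semantics of QCTL within an environment `ε` (a partial map from quantified
propositions to sets of states): a proposition in the domain of `ε` is read from `ε`,
any other proposition is read from the labelling of the structure, and the
propositional quantifier extends `ε`. -/
def QCTL.satE {AP V : Type} (K : Kripke AP V) :
    QCTL AP → (AP → Option (Set V)) → V → Prop
  | .atom p, ε, x => match ε p with
      | some S => x ∈ S
      | none => p ∈ K.label x
  | .qneg φ, ε, x => ¬ φ.satE K ε x
  | .qor φ ψ, ε, x => φ.satE K ε x ∨ ψ.satE K ε x
  | .qEX φ, ε, x => ∃ y, K.E x y ∧ φ.satE K ε y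
  | .qEU φ ψ, ε, x => ∃ ρ : ℕ → V, ρ 0 = x ∧ (∀ i, K.E (ρ i) (ρ (i + 1))) ∧
      ∃ i, ψ.satE K ε (ρ i) ∧ ∀ j < i, φ.satE K ε (ρ j)
  | .qAU φ ψ, ε, x => ∀ ρ : ℕ → V, ρ 0 = x → (∀ i, K.E (ρ i) (ρ (i + 1))) →
      ∃ i, ψ.satE K ε (ρ i) ∧ ∀ j < i, φ.satE K ε (ρ j)
  | .qexi p φ, ε, x =>
      ∃ S : Set V, φ.satE K (fun q => if q = p then some S else ε q) x

/-- The domain of an environment. -/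
def envDom {AP V : Type} (ε : AP → Option (Set V)) : Set AP := {p | ε p ≠ none}

/-- The Boolean valuation `v_ε` associated with an environment `ε`:
`v_ε(p^x) = ⊤` iff `x ∈ ε(p)`. -/
def envVal {AP V : Type} (ε : AP → Option (Set V)) : AP × V → Prop :=
  fun w => ∃ S, ε w.1 = some S ∧ w.2 ∈ S
/-- Formulas built from atomic propositions, Boolean operators, propositional
quantifiers and the modalities `EX` and `AG` (the target fragment of the fixed-point
transformation `FPC`). -/
inductive AGF (AP : Type) : Type where
  | atom : AP → AGF AP
  | aneg : AGF AP → AGF AP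
  | aor  : AGF AP → AGF AP → AGF AP
  | aEX  : AGF AP → AGF AP
  | aAG  : AGF AP → AGF AP
  | aexi : AP → AGF AP → AGF AP

namespace AGF
variable {AP : Type}
def aand (φ ψ : AGF AP) : AGF AP := aneg (aor (aneg φ) (aneg ψ))
def aimp (φ ψ : AGF AP) : AGF AP := aor (aneg φ) ψ
def aiff (φ ψ : AGF AP) : AGF AP := aand (aimp φ ψ) (aimp ψ φ)
def aAX (φ : AGF AP) : AGF AP := aneg (aEX (aneg φ))
def aall (p : AP) (φ : AGF AP) : AGF AP := aneg (aexi p (aneg φ))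

/-- An upper bound on the atomic propositions occurring in a formula over `AP = ℕ`
(used to generate fresh propositions). -/
def maxAtom : AGF ℕ → ℕ
  | atom p => p
  | aneg φ => φ.maxAtom
  | aor φ ψ => max φ.maxAtom ψ.maxAtom
  | aEX φ => φ.maxAtom
  | aAG φ => φ.maxAtom
  | aexi p φ => max p φ.maxAtom
end AGF

/-- The fixed-point transformation `FPC`: every `E φ U ψ` is replaced by
`∀z.( AG( z ↔ (ψ ∨ (φ ∧ EX z)) ) → z )` and every `A φ U ψ` by
`∀z.( AG( z ↔ (ψ ∨ (φ ∧ AX z)) ) → z )`, with `z` fresh each time. -/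
def FPC : QCTL ℕ → AGF ℕ
  | .atom p => AGF.atom p
  | .qneg φ => AGF.aneg (FPC φ)
  | .qor φ ψ => AGF.aor (FPC φ) (FPC ψ)
  | .qEX φ => AGF.aEX (FPC φ)
  | .qEU φ ψ =>
      let φ' := FPC φ
      let ψ' := FPC ψ
      let z := max φ'.maxAtom ψ'.maxAtom + 1
      AGF.aall z (AGF.aimp
        (AGF.aAG (AGF.aiff (AGF.atom z) (ψ'.aor (φ'.aand (AGF.aEX (AGF.atom z))))))
        (AGF.atom z))
  | .qAU φ ψ =>
      let φ' := FPC φ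
      let ψ' := FPC ψ
      let z := max φ'.maxAtom ψ'.maxAtom + 1
      AGF.aall z (AGF.aimp
        (AGF.aAG (AGF.aiff (AGF.atom z) (ψ'.aor (φ'.aand (AGF.aAX (AGF.atom z))))))
        (AGF.atom z))
  | .qexi p φ => AGF.aexi p (FPC φ)

/-- The translation of the `EX`/`AG` fragment into QBF: the basic rules together with
the rule `(AG φ)^{x,P} = ⋀_{(x,y)∈E*} φ̂^{y,P}`. -/
noncomputable def hatAG {V : Type} [Fintype V] (K : Kripke ℕ V) :
    AGF ℕ → V → Set ℕ → QBF (ℕ × V)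
  | .atom p, x, P =>
      if p ∈ P then QBF.var (p, x)
      else if p ∈ K.label x then QBF.tru else QBF.fls
  | .aneg φ, x, P => QBF.bneg (hatAG K φ x P)
  | .aor φ ψ, x, P => QBF.bor (hatAG K φ x P) (hatAG K ψ x P)
  | .aEX φ, x, P => QBF.bigOr (K.succList x) (fun y => hatAG K φ y P)
  | .aAG φ, x, P => QBF.bigAnd (K.reachList x) (fun y => hatAG K φ y P)
  | .aexi p φ, x, P =>
      (Finset.univ.toList (α := V)).foldr (fun v acc => QBF.bexi (p, v) acc)
        (hatAG K φ x (insert p P))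
section Aux

/-- Atoms of an AGF formula. -/
def AGF.atomsA {AP : Type} : AGF AP → Set AP
  | .atom p => {p}
  | .aneg φ => φ.atomsA
  | .aor φ ψ => φ.atomsA ∪ ψ.atomsA
  | .aEX φ => φ.atomsA
  | .aAG φ => φ.atomsA
  | .aexi p φ => insert p φ.atomsA

lemma AGF.le_maxAtom : ∀ (α : AGF ℕ), ∀ p ∈ α.atomsA, p ≤ α.maxAtom := by
  intro α
  induction α with
  | atom q => intro p hp; simp [atomsA] at hp; simp [maxAtom, hp]
  | aneg φ ih => exact ih
  | aor φ ψ ihφ ihψ =>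
      intro p hp
      rcases hp with h | h
      · exact le_trans (ihφ p h) (le_max_left _ _)
      · exact le_trans (ihψ p h) (le_max_right _ _)
  | aEX φ ih => exact ih
  | aAG φ ih => exact ih
  | aexi q φ ih =>
      intro p hp
      rcases hp with h | h
      · simp [h, maxAtom]
      · exact le_trans (ih p h) (le_max_right _ _)

lemma hatAG_fresh {V : Type} [Fintype V] (K : Kripke ℕ V) (α : AGF ℕ) (z : ℕ)
    (hz : z ∉ α.atomsA) : ∀ (x : V) (P : Set ℕ),
    hatAG K α x (insert z P) = hatAG K α x P := by
  induction α with
  | atom p =>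
      intro x P
      have hpz : p ≠ z := by rintro rfl; exact hz rfl
      simp [hatAG, Set.mem_insert_iff, hpz]
  | aneg φ ih => intro x P; simp [hatAG, ih (fun h => hz h)]
  | aor φ ψ ihφ ihψ =>
      intro x P
      simp [hatAG, ihφ (fun h => hz (Or.inl h)), ihψ (fun h => hz (Or.inr h))]
  | aEX φ ih => intro x P; simp [hatAG, ih (fun h => hz h)]
  | aAG φ ih => intro x P; simp [hatAG, ih (fun h => hz h)]
  | aexi p φ ih =>
      intro x P
      have hz' : z ∉ φ.atomsA := fun h => hz (Or.inr h)
      simp only [hatAG]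
      rw [Set.insert_comm p z, ih hz']

lemma QBF.bsat_ext {W : Type} (α : QBF W) : ∀ {v1 v2 : W → Prop},
    (∀ w, v1 w ↔ v2 w) → (α.bsat v1 ↔ α.bsat v2) := by
  induction α with
  | tru => intro v1 v2 h; simp [QBF.bsat]
  | fls => intro v1 v2 h; simp [QBF.bsat]
  | var w => intro v1 v2 h; exact h w
  | bneg α ih => intro v1 v2 h; exact not_congr (ih h)
  | bor α β ihα ihβ => intro v1 v2 h; exact or_congr (ihα h) (ihβ h)
  | band α β ihα ihβ => intro v1 v2 h; exact and_congr (ihα h) (ihβ h)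
  | bexi w α ih =>
      intro v1 v2 h
      refine exists_congr fun b => ih fun w' => ?_
      by_cases hw : w' = w <;> simp [hw, h w']
  | ball w α ih =>
      intro v1 v2 h
      refine forall_congr' fun b => ih fun w' => ?_
      by_cases hw : w' = w <;> simp [hw, h w']

lemma bigOr_bsat {W γ : Type} (l : List γ) (f : γ → QBF W) (v : W → Prop) :
    (QBF.bigOr l f).bsat v ↔ ∃ y ∈ l, (f y).bsat v := by
  induction l with
  | nil => simp [QBF.bigOr, QBF.bsat]
  | cons a l ih =>
      have : QBF.bigOr (a :: l) f = QBF.bor (f a) (QBF.bigOr l f) := by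
        simp [QBF.bigOr]
      rw [this]
      simp [QBF.bsat, ih]

lemma bigAnd_bsat {W γ : Type} (l : List γ) (f : γ → QBF W) (v : W → Prop) :
    (QBF.bigAnd l f).bsat v ↔ ∀ y ∈ l, (f y).bsat v := by
  induction l with
  | nil => simp [QBF.bigAnd, QBF.bsat]
  | cons a l ih =>
      have : QBF.bigAnd (a :: l) f = QBF.band (f a) (QBF.bigAnd l f) := by
        simp [QBF.bigAnd]
      rw [this]
      simp [QBF.bsat, ih]

lemma foldr_bexi_bsat {V : Type} (p : ℕ) (l : List V) (α : QBF (ℕ × V))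
    (v0 : ℕ × V → Prop) :
    (l.foldr (fun v acc => QBF.bexi (p, v) acc) α).bsat v0 ↔
    ∃ g : V → Prop, α.bsat (fun w => if w.1 = p ∧ w.2 ∈ l then g w.2 else v0 w) := by
  induction l generalizing v0 with
  | nil =>
      simp only [List.foldr_nil, List.not_mem_nil, and_false, if_false]
      exact ⟨fun h => ⟨fun _ => True, h⟩, fun ⟨g, h⟩ => h⟩
  | cons a l ih =>
      simp only [List.foldr_cons, QBF.bsat]
      constructor
      · rintro ⟨b, hb⟩
        rw [ih] at hb
        obtain ⟨g, hg⟩ := hb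
        refine ⟨fun u => if u ∈ l then g u else b, ?_⟩
        refine (QBF.bsat_ext α fun w => ?_).mpr hg
        by_cases h1 : w.1 = p
        · by_cases h2 : w.2 ∈ l
          · simp [h1, h2, List.mem_cons]
          · by_cases h3 : w.2 = a
            · have hw : w = (p, a) := Prod.ext h1 h3
              simp [h1, h2, h3, hw, List.mem_cons]
            · have hw : w ≠ (p, a) := fun h => h3 (congrArg Prod.snd h)
              simp [h1, h2, h3, hw, List.mem_cons]
        · have hw : w ≠ (p, a) := fun h => h1 (congrArg Prod.fst h)
          simp [h1, hw]
      · rintro ⟨g, hg⟩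
        refine ⟨g a, ?_⟩
        rw [ih]
        refine ⟨g, (QBF.bsat_ext α fun w => ?_).mpr hg⟩
        by_cases h1 : w.1 = p
        · by_cases h2 : w.2 ∈ l
          · simp [h1, h2, List.mem_cons]
          · by_cases h3 : w.2 = a
            · have hw : w = (p, a) := Prod.ext h1 h3
              simp [h1, h2, h3, hw, List.mem_cons]
            · have hw : w ≠ (p, a) := fun h => h3 (congrArg Prod.snd h)
              simp [h1, h2, h3, hw, List.mem_cons]
        · have hw : w ≠ (p, a) := fun h => h1 (congrArg Prod.fst h)
          simp [h1, hw]

lemma foldr_bexi_univ {V : Type} [Fintype V] (p : ℕ) (α : QBF (ℕ × V))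
    (v0 : ℕ × V → Prop) :
    ((Finset.univ.toList (α := V)).foldr (fun v acc => QBF.bexi (p, v) acc) α).bsat v0 ↔
    ∃ g : V → Prop, α.bsat (fun w => if w.1 = p then g w.2 else v0 w) := by
  rw [foldr_bexi_bsat]
  refine exists_congr fun g => QBF.bsat_ext α fun w => ?_
  simp [Finset.mem_toList]

lemma hatAG_congr {V : Type} [Fintype V] (K : Kripke ℕ V) (α : AGF ℕ) :
    ∀ (x : V) (P : Set ℕ) (v1 v2 : ℕ × V → Prop),
    (∀ q ∈ α.atomsA, ∀ u : V, v1 (q, u) ↔ v2 (q, u)) →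
    ((hatAG K α x P).bsat v1 ↔ (hatAG K α x P).bsat v2) := by
  induction α with
  | atom p =>
      intro x P v1 v2 h
      by_cases hp : p ∈ P
      · simp only [hatAG, if_pos hp, QBF.bsat]
        exact h p rfl x
      · simp only [hatAG, if_neg hp]
        by_cases hl : p ∈ K.label x <;> simp [hl, QBF.bsat]
  | aneg φ ih =>
      intro x P v1 v2 h
      simp only [hatAG, QBF.bsat]
      exact not_congr (ih x P v1 v2 h)
  | aor φ ψ ihφ ihψ =>
      intro x P v1 v2 h
      simp only [hatAG, QBF.bsat]
      exact or_congr (ihφ x P v1 v2 (fun q hq => h q (Or.inl hq)))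
        (ihψ x P v1 v2 (fun q hq => h q (Or.inr hq)))
  | aEX φ ih =>
      intro x P v1 v2 h
      simp only [hatAG, bigOr_bsat]
      exact exists_congr fun y => and_congr Iff.rfl (ih y P v1 v2 h)
  | aAG φ ih =>
      intro x P v1 v2 h
      simp only [hatAG, bigAnd_bsat]
      exact forall_congr' fun y => imp_congr Iff.rfl (ih y P v1 v2 h)
  | aexi p φ ih =>
      intro x P v1 v2 h
      simp only [hatAG]
      rw [foldr_bexi_univ, foldr_bexi_univ]
      refine exists_congr fun g => ih x _ _ _ ?_
      intro q hq u
      by_cases hqp : q = p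
      · simp [hqp]
      · simpa [hqp] using h q (Or.inr hq) u

lemma mem_succList {V : Type} [Fintype V] (K : Kripke ℕ V) (x y : V) :
    y ∈ K.succList x ↔ K.E x y := by
  simp [Kripke.succList]

lemma mem_reachList {V : Type} [Fintype V] (K : Kripke ℕ V) (x y : V) :
    y ∈ K.reachList x ↔ Relation.ReflTransGen K.E x y := by
  simp [Kripke.reachList]

lemma Kripke.exists_path {AP V : Type} (K : Kripke AP V) (x : V) :
    ∃ ρ : ℕ → V, ρ 0 = x ∧ ∀ i, K.E (ρ i) (ρ (i + 1)) := by
  refine ⟨fun n => Nat.rec x (fun _ prev => Classical.choose (K.serial prev)) n, rfl, ?_⟩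
  intro i
  exact Classical.choose_spec (K.serial _)

lemma path_rtg {AP V : Type} (K : Kripke AP V) (ρ : ℕ → V)
    (h : ∀ i, K.E (ρ i) (ρ (i + 1))) (k : ℕ) :
    Relation.ReflTransGen K.E (ρ 0) (ρ k) := by
  induction k with
  | zero => exact Relation.ReflTransGen.refl
  | succ k ih => exact ih.tail (h k)

end Aux
section Fix
variable {AP V : Type}

lemma EU_fix (K : Kripke AP V) (Sφ Sψ : V → Prop) (x : V) :
    (∃ ρ : ℕ → V, ρ 0 = x ∧ (∀ i, K.E (ρ i) (ρ (i + 1))) ∧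
      ∃ i, Sψ (ρ i) ∧ ∀ j < i, Sφ (ρ j)) ↔
    (∀ g : V → Prop, (∀ y, Relation.ReflTransGen K.E x y →
        (g y ↔ Sψ y ∨ (Sφ y ∧ ∃ y', K.E y y' ∧ g y'))) → g x) := by
  constructor
  · rintro ⟨ρ, h0, hE, i, hψ, hφ⟩ g hg
    have key : ∀ d, g (ρ (i - d)) := by
      intro d
      induction d with
      | zero =>
          have hr : Relation.ReflTransGen K.E x (ρ i) := h0 ▸ path_rtg K ρ hE i
          exact (hg _ hr).mpr (Or.inl (by simpa using hψ))
      | succ d ihd =>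
          rcases Nat.lt_or_ge d i with hd | hd
          · have h1 : i - (d + 1) + 1 = i - d := by omega
            have hlt : i - (d + 1) < i := by omega
            have hr : Relation.ReflTransGen K.E x (ρ (i - (d + 1))) :=
              h0 ▸ path_rtg K ρ hE _
            refine (hg _ hr).mpr (Or.inr ⟨hφ _ hlt, ρ (i - d), ?_, ihd⟩)
            rw [← h1]
            exact hE _
          · have h1 : i - (d + 1) = i - d := by omega
            rw [h1]; exact ihd
    have := key i
    rwa [Nat.sub_self, h0] at this
  · intro h
    apply h (fun y => ∃ ρ : ℕ → V, ρ 0 = y ∧ (∀ i, K.E (ρ i) (ρ (i + 1))) ∧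
      ∃ i, Sψ (ρ i) ∧ ∀ j < i, Sφ (ρ j))
    intro y _
    constructor
    · rintro ⟨ρ, h0, hE, i, hψ, hφ⟩
      rcases Nat.eq_zero_or_pos i with hi | hi
      · subst hi
        left; rwa [h0] at hψ
      · right
        refine ⟨by have := hφ 0 hi; rwa [h0] at this, ρ 1, by rw [← h0]; exact hE 0, ?_⟩
        refine ⟨fun n => ρ (n + 1), rfl, fun j => hE (j + 1), i - 1, ?_, ?_⟩
        · show Sψ (ρ (i - 1 + 1))
          have h1 : i - 1 + 1 = i := by omega
          rw [h1]; exact hψ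
        · intro j hj; exact hφ (j + 1) (by omega)
    · rintro (hy | ⟨hy, y', hE', ρ, h0, hE, i, hψ, hφ⟩)
      · obtain ⟨ρ, h0, hE⟩ := K.exists_path y
        exact ⟨ρ, h0, hE, 0, by rwa [h0], fun j hj => (Nat.not_lt_zero j hj).elim⟩
      · refine ⟨fun n => Nat.rec y (fun k _ => ρ k) n, rfl, ?_, i + 1, hψ, ?_⟩
        · intro n
          cases n with
          | zero => show K.E y (ρ 0); rw [h0]; exact hE'
          | succ n => exact hE n
        · intro j hj
          cases j with
          | zero => exact hy
          | succ j => exact hφ j (by omega)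

lemma AU_fix (K : Kripke AP V) (Sφ Sψ : V → Prop) (x : V) :
    (∀ ρ : ℕ → V, ρ 0 = x → (∀ i, K.E (ρ i) (ρ (i + 1))) →
      ∃ i, Sψ (ρ i) ∧ ∀ j < i, Sφ (ρ j)) ↔
    (∀ g : V → Prop, (∀ y, Relation.ReflTransGen K.E x y →
        (g y ↔ Sψ y ∨ (Sφ y ∧ ∀ y', K.E y y' → g y'))) → g x) := by
  constructor
  · intro hAU g hg
    by_contra hgx
    classical
    set step : V → V := fun y =>
      if h : ∃ y', K.E y y' ∧ ¬ g y' then h.choose else (K.serial y).choose with hstepdef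
    have hstepE : ∀ y, K.E y (step y) := by
      intro y
      rw [hstepdef]
      by_cases h : ∃ y', K.E y y' ∧ ¬ g y'
      · simp only [dif_pos h]; exact h.choose_spec.1
      · simp only [dif_neg h]; exact (K.serial y).choose_spec
    have hstepG : ∀ y, (∃ y', K.E y y' ∧ ¬ g y') → ¬ g (step y) := by
      intro y h
      rw [hstepdef]
      simp only [dif_pos h]
      exact h.choose_spec.2
    set ρ : ℕ → V := fun n => Nat.rec x (fun _ prev => step prev) n with hρdef
    have hρ0 : ρ 0 = x := rfl
    have hE : ∀ i, K.E (ρ i) (ρ (i + 1)) := fun i => hstepE (ρ i)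
    have hreach : ∀ k, Relation.ReflTransGen K.E x (ρ k) := fun k => path_rtg K ρ hE k
    have inv : ∀ k, (¬ g (ρ k) ∧ ∀ j ≤ k, ¬ Sψ (ρ j)) ∨
        (∃ j ≤ k, ¬ Sφ (ρ j) ∧ ∀ j' ≤ j, ¬ Sψ (ρ j')) := by
      intro k
      induction k with
      | zero =>
          left
          refine ⟨hgx, ?_⟩
          intro j hj
          interval_cases j
          intro hψ
          exact hgx ((hg x (hreach 0)).mpr (Or.inl hψ))
      | succ k ihk =>
          rcases ihk with ⟨hgk, hψk⟩ | ⟨j, hj, h1, h2⟩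
          · have hfix := hg (ρ k) (hreach k)
            have hnot : ¬ (Sψ (ρ k) ∨ (Sφ (ρ k) ∧ ∀ y', K.E (ρ k) y' → g y')) :=
              fun h => hgk (hfix.mpr h)
            push_neg at hnot
            obtain ⟨hnψ, hnd⟩ := hnot
            by_cases hSφ : Sφ (ρ k)
            · obtain ⟨y', hy'E, hy'g⟩ := hnd hSφ
              have hnext : ¬ g (ρ (k + 1)) := hstepG (ρ k) ⟨y', hy'E, hy'g⟩
              left
              refine ⟨hnext, ?_⟩
              intro j hj
              by_cases hjk : j ≤ k
              · exact hψk j hjk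
              · have hje : j = k + 1 := by omega
                subst hje
                intro hψ'
                exact hnext ((hg _ (hreach (k + 1))).mpr (Or.inl hψ'))
            · right
              exact ⟨k, Nat.le_succ k, hSφ, hψk⟩
          · right
            exact ⟨j, le_trans hj (Nat.le_succ k), h1, h2⟩
    obtain ⟨i, hψi, hφi⟩ := hAU ρ hρ0 hE
    rcases inv i with ⟨_, hψ⟩ | ⟨j, hj, h1, h2⟩
    · exact hψ i le_rfl hψi
    · rcases lt_or_eq_of_le hj with h | h
      · exact h1 (hφi j h)
      · subst h; exact h2 j le_rfl hψi
  · intro h ρ h0 hE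
    revert h0
    -- use g := AU predicate
    have := h (fun y => ∀ ρ : ℕ → V, ρ 0 = y → (∀ i, K.E (ρ i) (ρ (i + 1))) →
      ∃ i, Sψ (ρ i) ∧ ∀ j < i, Sφ (ρ j)) ?_
    · intro h0; exact this ρ h0 hE
    intro y _
    constructor
    · intro hy
      by_cases hψ : Sψ y
      · exact Or.inl hψ
      · right
        constructor
        · obtain ⟨σ, s0, sE⟩ := K.exists_path y
          obtain ⟨i, hψi, hφi⟩ := hy σ s0 sE
          rcases Nat.eq_zero_or_pos i with hi | hi
          · subst hi; rw [s0] at hψi; exact absurd hψi hψ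
          · have := hφi 0 hi; rwa [s0] at this
        · intro y' hE' σ s0 sE
          have hpre : ∃ i, Sψ ((fun n => Nat.rec y (fun k _ => σ k) n) i) ∧
              ∀ j < i, Sφ ((fun n => Nat.rec y (fun k _ => σ k) n) j) := by
            apply hy
            · rfl
            · intro n
              cases n with
              | zero => show K.E y (σ 0); rw [s0]; exact hE'
              | succ n => exact sE n
          obtain ⟨i, hψi, hφi⟩ := hpre
          rcases Nat.eq_zero_or_pos i with hi | hi
          · subst hi; exact absurd hψi hψ
          · refine ⟨i - 1, ?_, ?_⟩
            · have h1 : i - 1 + 1 = i := by omega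
              have h2 : Sψ ((fun n => Nat.rec y (fun k _ => σ k) n) (i - 1 + 1)) := by
                rw [h1]; exact hψi
              exact h2
            · intro j hj
              have := hφi (j + 1) (by omega)
              exact this
    · rintro (hψ | ⟨hφ', hsucc⟩) σ s0 sE
      · exact ⟨0, by rwa [s0], fun j hj => (Nat.not_lt_zero j hj).elim⟩
      · have hE1 : K.E y (σ 1) := by rw [← s0]; exact sE 0
        obtain ⟨i, hψi, hφi⟩ := hsucc (σ 1) hE1 (fun n => σ (n + 1)) rfl (fun j => sE (j + 1))
        refine ⟨i + 1, hψi, ?_⟩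
        intro j hj
        cases j with
        | zero => rwa [s0]
        | succ j => exact hφi j (by omega)

end Fix
lemma main_correct {V : Type} [Fintype V] (K : Kripke ℕ V) :
    ∀ (φ : QCTL ℕ) (x : V) (ε : ℕ → Option (Set V)),
      φ.satE K ε x ↔ (hatAG K (FPC φ) x (envDom ε)).bsat (envVal ε) := by
  intro φ
  induction φ with
  | atom p =>
      intro x ε
      cases hεp : ε p with
      | none =>
          have hp : p ∉ envDom ε := by simp [envDom, hεp]
          simp only [QCTL.satE, FPC, hatAG, if_neg hp, hεp]
          by_cases hl : p ∈ K.label x <;> simp [hl, QBF.bsat]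
      | some S =>
          have hp : p ∈ envDom ε := by simp [envDom, hεp]
          simp only [QCTL.satE, FPC, hatAG, if_pos hp, hεp, QBF.bsat]
          simp [envVal, hεp]
  | qneg φ ih =>
      intro x ε
      simp only [QCTL.satE, FPC, hatAG, QBF.bsat]
      exact not_congr (ih x ε)
  | qor φ ψ ihφ ihψ =>
      intro x ε
      simp only [QCTL.satE, FPC, hatAG, QBF.bsat]
      exact or_congr (ihφ x ε) (ihψ x ε)
  | qEX φ ih =>
      intro x ε
      simp only [QCTL.satE, FPC, hatAG]
      rw [bigOr_bsat]
      exact exists_congr fun y => and_congr (mem_succList K x y).symm (ih y ε)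
  | qexi p φ ih =>
      intro x ε
      simp only [QCTL.satE, FPC, hatAG]
      rw [foldr_bexi_univ]
      have key : ∀ S : Set V,
          φ.satE K (fun q => @ite _ (q = p) (Classical.propDecidable _) (some S) (ε q)) x ↔
          (hatAG K (FPC φ) x (insert p (envDom ε))).bsat
            (fun w => if w.1 = p then w.2 ∈ S else envVal ε w) := by
        intro S
        have hdom : envDom (fun q => @ite _ (q = p) (Classical.propDecidable _) (some S) (ε q))
            = insert p (envDom ε) := by
          ext q; by_cases hq : q = p <;> simp [envDom, hq]
        have h1 := ih x (fun q => @ite _ (q = p) (Classical.propDecidable _) (some S) (ε q))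
        rw [hdom] at h1
        refine h1.trans (QBF.bsat_ext _ fun w => ?_)
        by_cases hw : w.1 = p <;> simp [envVal, hw]
      constructor
      · rintro ⟨S, hS⟩
        exact ⟨fun u => u ∈ S, (key S).mp hS⟩
      · rintro ⟨g, hg⟩
        exact ⟨{u | g u}, (key {u | g u}).mpr hg⟩
  | qEU φ ψ ihφ ihψ =>
      intro x ε
      simp only [QCTL.satE]
      rw [EU_fix K (fun y => φ.satE K ε y) (fun y => ψ.satE K ε y) x]
      show _ ↔ (hatAG K (AGF.aall (max (FPC φ).maxAtom (FPC ψ).maxAtom + 1)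
        (AGF.aimp (AGF.aAG (AGF.aiff (AGF.atom (max (FPC φ).maxAtom (FPC ψ).maxAtom + 1))
          ((FPC ψ).aor ((FPC φ).aand (AGF.aEX (AGF.atom (max (FPC φ).maxAtom (FPC ψ).maxAtom + 1)))))))
        (AGF.atom (max (FPC φ).maxAtom (FPC ψ).maxAtom + 1)))) x (envDom ε)).bsat (envVal ε)
      set z := max (FPC φ).maxAtom (FPC ψ).maxAtom + 1 with hzdef
      simp only [AGF.aall, AGF.aimp, AGF.aiff, AGF.aand, AGF.aAX, hatAG, QBF.bsat]
      rw [foldr_bexi_univ]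
      simp only [QBF.bsat, not_exists, not_not]
      apply forall_congr'
      intro g
      have hzφ : z ∉ (FPC φ).atomsA := fun h => by
        have := AGF.le_maxAtom _ _ h; omega
      have hzψ : z ∉ (FPC ψ).atomsA := fun h => by
        have := AGF.le_maxAtom _ _ h; omega
      have hψR : ∀ y : V, (hatAG K (FPC ψ) y (insert z (envDom ε))).bsat
          (fun w => if w.1 = z then g w.2 else envVal ε w) ↔ QCTL.satE K ψ ε y := by
        intro y
        rw [hatAG_fresh K (FPC ψ) z hzψ y (envDom ε)]
        refine (hatAG_congr K (FPC ψ) y (envDom ε) _ _ ?_).trans (ihψ y ε).symm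
        intro q hq u
        have hq' : q ≠ z := by
          have := AGF.le_maxAtom _ _ hq; omega
        simp [hq']
      have hφR : ∀ y : V, (hatAG K (FPC φ) y (insert z (envDom ε))).bsat
          (fun w => if w.1 = z then g w.2 else envVal ε w) ↔ QCTL.satE K φ ε y := by
        intro y
        rw [hatAG_fresh K (FPC φ) z hzφ y (envDom ε)]
        refine (hatAG_congr K (FPC φ) y (envDom ε) _ _ ?_).trans (ihφ y ε).symm
        intro q hq u
        have hq' : q ≠ z := by
          have := AGF.le_maxAtom _ _ hq; omega
        simp [hq']
      simp only [Set.mem_insert_iff, eq_self_iff_true, true_or, if_true, QBF.bsat,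
        bigAnd_bsat, bigOr_bsat, mem_reachList, mem_succList, hψR, hφR]
      rw [← imp_iff_not_or]
      refine imp_congr (forall_congr' fun y => imp_congr Iff.rfl ?_) Iff.rfl
      generalize (∃ y', K.E y y' ∧ g y') = B
      simp only [not_or, not_not, iff_def]
      tauto
  | qAU φ ψ ihφ ihψ =>
      intro x ε
      simp only [QCTL.satE]
      rw [AU_fix K (fun y => φ.satE K ε y) (fun y => ψ.satE K ε y) x]
      show _ ↔ (hatAG K (AGF.aall (max (FPC φ).maxAtom (FPC ψ).maxAtom + 1)
        (AGF.aimp (AGF.aAG (AGF.aiff (AGF.atom (max (FPC φ).maxAtom (FPC ψ).maxAtom + 1))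
          ((FPC ψ).aor ((FPC φ).aand (AGF.aAX (AGF.atom (max (FPC φ).maxAtom (FPC ψ).maxAtom + 1)))))))
        (AGF.atom (max (FPC φ).maxAtom (FPC ψ).maxAtom + 1)))) x (envDom ε)).bsat (envVal ε)
      set z := max (FPC φ).maxAtom (FPC ψ).maxAtom + 1 with hzdef
      simp only [AGF.aall, AGF.aimp, AGF.aiff, AGF.aand, AGF.aAX, hatAG, QBF.bsat]
      rw [foldr_bexi_univ]
      simp only [QBF.bsat, not_exists, not_not]
      apply forall_congr'
      intro g
      have hzφ : z ∉ (FPC φ).atomsA := fun h => by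
        have := AGF.le_maxAtom _ _ h; omega
      have hzψ : z ∉ (FPC ψ).atomsA := fun h => by
        have := AGF.le_maxAtom _ _ h; omega
      have hψR : ∀ y : V, (hatAG K (FPC ψ) y (insert z (envDom ε))).bsat
          (fun w => if w.1 = z then g w.2 else envVal ε w) ↔ QCTL.satE K ψ ε y := by
        intro y
        rw [hatAG_fresh K (FPC ψ) z hzψ y (envDom ε)]
        refine (hatAG_congr K (FPC ψ) y (envDom ε) _ _ ?_).trans (ihψ y ε).symm
        intro q hq u
        have hq' : q ≠ z := by
          have := AGF.le_maxAtom _ _ hq; omega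
        simp [hq']
      have hφR : ∀ y : V, (hatAG K (FPC φ) y (insert z (envDom ε))).bsat
          (fun w => if w.1 = z then g w.2 else envVal ε w) ↔ QCTL.satE K φ ε y := by
        intro y
        rw [hatAG_fresh K (FPC φ) z hzφ y (envDom ε)]
        refine (hatAG_congr K (FPC φ) y (envDom ε) _ _ ?_).trans (ihφ y ε).symm
        intro q hq u
        have hq' : q ≠ z := by
          have := AGF.le_maxAtom _ _ hq; omega
        simp [hq']
      simp only [Set.mem_insert_iff, eq_self_iff_true, true_or, if_true, QBF.bsat,
        bigAnd_bsat, bigOr_bsat, mem_reachList, mem_succList, hψR, hφR,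
        not_exists, not_and, not_not]
      rw [← imp_iff_not_or]
      refine imp_congr (forall_congr' fun y => imp_congr Iff.rfl ?_) Iff.rfl
      generalize (∀ y', K.E y y' → g y') = B
      simp only [not_or, not_not, iff_def]
      tauto
/-- Correctness of the fixed-point reduction (method FP): for any subformula `φ` of `Φ`
(where the propositions quantified in `Φ` are fresh, i.e. do not label the structure),
any state `x` and any environment `ε`, we have
`K,x ⊨_ε φ  iff  v_ε ⊨ FPC(φ)^{x,dom(ε)}`. -/
theorem hatFP_correct {V : Type} [Fintype V] (K : Kripke ℕ V)
    (Φ φ : QCTL ℕ) (x : V) (ε : ℕ → Option (Set V))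
    (hsub : φ ∈ Φ.subforms)
    (hdom : envDom ε ⊆ Φ.quantAtoms)
    (hfresh : ∀ p ∈ Φ.quantAtoms, ∀ v : V, p ∉ K.label v) :
    φ.satE K ε x ↔ (hatAG K (FPC φ) x (envDom ε)).bsat (envVal ε) := by
  exact main_correct K φ x ε
end

section
/- Flattening of CTL: any CTL formula Φ is equivalent to a QCTL formula Ψ of the form ∃{κ_1,…,κ_m}.( Φ_0 ∧ ⋀_{i=1..m} AG( κ_i ↔ θ_i ) ), where κ_1,…,κ_m are fresh atomic propositions, Φ_0 is a Boolean combination of basic CTL formulas, and every θ_i is a basic CTL formula; moreover |Ψ| is in O(|Φ|). -/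
open Classical

variable {AP V : Type}

/-- `∃p₁.…∃pₙ.φ` for a list of atomic propositions. -/
def exiMany {AP : Type} (l : List AP) (φ : QCTL AP) : QCTL AP := l.foldr QCTL.qexi φ

/-- Conjunction of a list of formulas, with a final base conjunct. -/
def conjList {AP : Type} (l : List (QCTL AP)) (base : QCTL AP) : QCTL AP :=
  l.foldr QCTL.qand base

/-- Disjunction of a list of formulas, with a final base disjunct. -/
def disjList {AP : Type} (l : List (QCTL AP)) (base : QCTL AP) : QCTL AP :=
  l.foldr QCTL.qor base
/-- Boolean combinations of atomic propositions. -/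
inductive BoolAtoms {AP : Type} : QCTL AP → Prop where
  | atom (p : AP) : BoolAtoms (QCTL.atom p)
  | qneg {φ} : BoolAtoms φ → BoolAtoms (QCTL.qneg φ)
  | qor {φ ψ} : BoolAtoms φ → BoolAtoms ψ → BoolAtoms (QCTL.qor φ ψ)

/-- Basic CTL formulas: `EX α`, `E α U β` or `A α U β` with `α`, `β` Boolean
combinations of atomic propositions. -/
inductive BasicCTL {AP : Type} : QCTL AP → Prop where
  | qEX {α} : BoolAtoms α → BasicCTL (QCTL.qEX α)
  | qEU {α β} : BoolAtoms α → BoolAtoms β → BasicCTL (QCTL.qEU α β)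
  | qAU {α β} : BoolAtoms α → BoolAtoms β → BasicCTL (QCTL.qAU α β)

/-- Boolean combinations of basic CTL formulas (and of atomic propositions). -/
inductive BoolCombBasic {AP : Type} : QCTL AP → Prop where
  | basic {φ} : BasicCTL φ → BoolCombBasic φ
  | atom (p : AP) : BoolCombBasic (QCTL.atom p)
  | qneg {φ} : BoolCombBasic φ → BoolCombBasic (QCTL.qneg φ)
  | qor {φ ψ} : BoolCombBasic φ → BoolCombBasic ψ → BoolCombBasic (QCTL.qor φ ψ)

/-- Quantifier-free QCTL formulas, i.e. CTL formulas. -/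
def QCTL.quantFree {AP : Type} : QCTL AP → Prop
  | .atom _ => True
  | .qneg φ => φ.quantFree
  | .qor φ ψ => φ.quantFree ∧ ψ.quantFree
  | .qEX φ => φ.quantFree
  | .qEU φ ψ => φ.quantFree ∧ ψ.quantFree
  | .qAU φ ψ => φ.quantFree ∧ ψ.quantFree
  | .qexi _ _ => False

/-- The body `Φ₀ ∧ ⋀_{i=1..m} AG( κᵢ ↔ θᵢ )` of a flat formula. -/
def flatBody {AP : Type} [Inhabited AP] (m : ℕ) (κ : Fin m → AP)
    (Φ0 : QCTL AP) (θ : Fin m → QCTL AP) : QCTL AP :=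
  conjList
    ((List.finRange m).map fun i => QCTL.qAG (QCTL.qiff (QCTL.atom (κ i)) (θ i)))
    Φ0

/-!
Name every temporal subformula of `Φ` by a fresh proposition `κ`, innermost first, and
replace it by `κ`. The body `θ` of the definition `κ ↔ θ` is then basic, because the arguments
of the subformula have already been replaced by Boolean combinations of propositions, and `Φ`
itself becomes a Boolean combination `Φ₀` of propositions. Labelling each `κ` by the truth value
of the subformula it names makes every clause `AG (κ ↔ θ)` true. Conversely, by induction on
`Φ`, the clauses force this labelling on all states reachable from the evaluation point, which is
all the semantics of `Φ` looks at. Every temporal subformula costs one definition, and the bodies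
together with `Φ₀` have size at most `2 |Φ|`, so `|Ψ| ≤ 26 |Φ|`.
-/

theorem List.map_fun_getElem_finRange {α β : Type} (l : List α) (g : α → β) :
    (List.finRange l.length).map (fun i => g l[i]) = l.map g :=
  List.ext_getElem (by simp) (by simp)

theorem Set.Finite.exists_injective_nat_notMem {α : Type} [Infinite α] {A : Set α}
    (hA : A.Finite) : ∃ f : ℕ → α, Function.Injective f ∧ ∀ k, f k ∉ A :=
  let e := hA.infinite_compl.natEmbedding
  ⟨fun k => e k, fun _ _ h => e.injective (Subtype.ext h), fun k => (e k).2⟩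

namespace Kripke

def AgreeOutside (K K' : Kripke AP V) (s : Set AP) : Prop :=
  K'.E = K.E ∧ ∀ v q, q ∉ s → (q ∈ K'.label v ↔ q ∈ K.label v)

theorem AgreeOutside.eq_of_eq_empty {K K' : Kripke AP V} {s : Set AP}
    (h : K.AgreeOutside K' s) (hs : s = ∅) : K' = K := by
  obtain ⟨E, serial, label⟩ := K
  obtain ⟨E', serial', label'⟩ := K'
  obtain ⟨rfl, hlabel⟩ := h
  subst hs
  congr
  ext v q
  exact hlabel v q (Set.notMem_empty q)

theorem exists_relabel (K : Kripke AP V) (s : Set AP) (P : AP → V → Prop) :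
    ∃ K' : Kripke AP V, K.AgreeOutside K' s ∧ ∀ q ∈ s, ∀ v, q ∈ K'.label v ↔ P q v := by
  refine ⟨⟨K.E, K.serial, fun v => {q | if q ∈ s then P q v else q ∈ K.label v}⟩,
    ⟨rfl, fun v q hq => ?_⟩, fun q hq v => ?_⟩ <;> simp [hq]

noncomputable def next (K : Kripke AP V) (v : V) : V :=
  (K.serial v).choose

theorem exists_path_of_reflTransGen (K : Kripke AP V) {x y : V}
    (h : Relation.ReflTransGen K.E x y) :
    ∃ ρ : ℕ → V, ρ 0 = x ∧ (∀ i, K.E (ρ i) (ρ (i + 1))) ∧ ∃ i, ρ i = y := by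
  induction h using Relation.ReflTransGen.head_induction_on with
  | refl =>
    refine ⟨fun i => K.next^[i] y, rfl, fun i => ?_, 0, rfl⟩
    show K.E (K.next^[i] y) (K.next^[i + 1] y)
    rw [Function.iterate_succ_apply']
    exact (K.serial _).choose_spec
  | @head x z hxz _ ih =>
    obtain ⟨ρ, rfl, hρ, i, rfl⟩ := ih
    exact ⟨fun | 0 => x | k + 1 => ρ k, rfl, fun | 0 => hxz | k + 1 => hρ k, i + 1, rfl⟩

theorem reflTransGen_of_path (K : Kripke AP V) {ρ : ℕ → V}
    (hρ : ∀ i, K.E (ρ i) (ρ (i + 1))) (i : ℕ) : Relation.ReflTransGen K.E (ρ 0) (ρ i) := by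
  induction i with
  | zero => exact .refl
  | succ i ih => exact ih.tail (hρ i)

theorem path_mem {K : Kripke AP V} {S : Set V} (hS : ∀ ⦃y z⦄, y ∈ S → K.E y z → z ∈ S)
    {ρ : ℕ → V} (hρ : ∀ i, K.E (ρ i) (ρ (i + 1))) (h0 : ρ 0 ∈ S) (i : ℕ) : ρ i ∈ S := by
  induction i with
  | zero => exact h0
  | succ i ih => exact hS ih (hρ i)

end Kripke

namespace QCTL

variable {K : Kripke AP V} {x : V}

theorem sat_qand {φ ψ : QCTL AP} : (qand φ ψ).sat K x ↔ φ.sat K x ∧ ψ.sat K x := by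
  simp [qand, sat]

theorem sat_qiff {φ ψ : QCTL AP} : (qiff φ ψ).sat K x ↔ (φ.sat K x ↔ ψ.sat K x) := by
  simp only [qiff, qimp, sat_qand, sat]
  tauto

theorem sat_qtop [Inhabited AP] : (qtop : QCTL AP).sat K x :=
  _root_.em _

theorem sat_qAG [Inhabited AP] {φ : QCTL AP} :
    (qAG φ).sat K x ↔ ∀ y, Relation.ReflTransGen K.E x y → φ.sat K y := by
  simp only [qAG, qEF, sat]
  constructor
  · intro h y hy
    by_contra hφ
    obtain ⟨ρ, h0, hρ, i, rfl⟩ := K.exists_path_of_reflTransGen hy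
    exact h ⟨ρ, h0, hρ, i, hφ, fun _ _ => sat_qtop⟩
  · rintro h ⟨ρ, rfl, hρ, i, hφ, -⟩
    exact hφ (h _ (K.reflTransGen_of_path hρ i))

theorem sat_conjList {L : List (QCTL AP)} {b : QCTL AP} :
    (conjList L b).sat K x ↔ (∀ φ ∈ L, φ.sat K x) ∧ b.sat K x := by
  induction L with
  | nil => simp [conjList]
  | cons φ L ih =>
    rw [conjList, List.foldr_cons, sat_qand, ← conjList, ih, List.forall_mem_cons, and_assoc]

theorem sat_exiMany {l : List AP} {φ : QCTL AP} :
    (exiMany l φ).sat K x ↔ ∃ K', K.AgreeOutside K' {q | q ∈ l} ∧ φ.sat K' x := by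
  induction l generalizing K with
  | nil =>
    refine ⟨fun h => ⟨K, ⟨rfl, fun _ _ _ => Iff.rfl⟩, h⟩, ?_⟩
    rintro ⟨K', hK', h⟩
    rwa [← hK'.eq_of_eq_empty (by simp)]
  | cons p l ih =>
    show (∃ K₁, K.AgreeExcept K₁ p ∧ (exiMany l φ).sat K₁ x) ↔ _
    simp only [ih]
    constructor
    · rintro ⟨K₁, ⟨hE₁, hl₁⟩, K₂, ⟨hE₂, hl₂⟩, h⟩
      refine ⟨K₂, ⟨hE₂.trans hE₁, fun v q hq => ?_⟩, h⟩
      simp only [List.mem_cons, Set.mem_ofPred_eq, not_or] at hq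
      exact (hl₂ v q hq.2).trans (hl₁ v q hq.1)
    · rintro ⟨K₂, ⟨hE₂, hl₂⟩, h⟩
      obtain ⟨K₁, ⟨hE₁, hl₁⟩, hp⟩ := K.exists_relabel {p} fun _ v => p ∈ K₂.label v
      refine ⟨K₁, ⟨hE₁, hl₁⟩, K₂, ⟨hE₂.trans hE₁.symm, fun v q hq => ?_⟩, h⟩
      by_cases hqp : q = p
      · subst hqp
        exact (hp q rfl v).symm
      · exact (hl₂ v q (by simpa [hqp] using hq)).trans (hl₁ v q hqp).symm

section Congr

variable {K K' : Kripke AP V} {S : Set V} {φ φ' ψ ψ' : QCTL AP}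

theorem until_congr (hS : ∀ ⦃y z⦄, y ∈ S → K.E y z → z ∈ S)
    (hφ : ∀ y ∈ S, φ'.sat K' y ↔ φ.sat K y) (hψ : ∀ y ∈ S, ψ'.sat K' y ↔ ψ.sat K y)
    {ρ : ℕ → V} (hρ : ∀ i, K.E (ρ i) (ρ (i + 1))) (h0 : ρ 0 ∈ S) :
    (∃ i, ψ'.sat K' (ρ i) ∧ ∀ j < i, φ'.sat K' (ρ j)) ↔
      ∃ i, ψ.sat K (ρ i) ∧ ∀ j < i, φ.sat K (ρ j) :=
  have hmem := Kripke.path_mem hS hρ h0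
  exists_congr fun i => and_congr (hψ _ (hmem i)) (forall₂_congr fun j _ => hφ _ (hmem j))

theorem sat_qEX_congr (hE : K'.E = K.E) (hS : ∀ ⦃y z⦄, y ∈ S → K.E y z → z ∈ S)
    (hφ : ∀ y ∈ S, φ'.sat K' y ↔ φ.sat K y) :
    ∀ y ∈ S, (qEX φ').sat K' y ↔ (qEX φ).sat K y := by
  intro y hy
  simp only [sat, hE]
  exact exists_congr fun z => and_congr_right fun hyz => hφ z (hS hy hyz)

theorem sat_qEU_congr (hE : K'.E = K.E) (hS : ∀ ⦃y z⦄, y ∈ S → K.E y z → z ∈ S)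
    (hφ : ∀ y ∈ S, φ'.sat K' y ↔ φ.sat K y) (hψ : ∀ y ∈ S, ψ'.sat K' y ↔ ψ.sat K y) :
    ∀ y ∈ S, (qEU φ' ψ').sat K' y ↔ (qEU φ ψ).sat K y := by
  intro y hy
  simp only [sat, hE]
  exact exists_congr fun ρ => and_congr_right fun h0 => and_congr_right fun hρ =>
    until_congr hS hφ hψ hρ (h0 ▸ hy)

theorem sat_qAU_congr (hE : K'.E = K.E) (hS : ∀ ⦃y z⦄, y ∈ S → K.E y z → z ∈ S)
    (hφ : ∀ y ∈ S, φ'.sat K' y ↔ φ.sat K y) (hψ : ∀ y ∈ S, ψ'.sat K' y ↔ ψ.sat K y) :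
    ∀ y ∈ S, (qAU φ' ψ').sat K' y ↔ (qAU φ ψ).sat K y := by
  intro y hy
  simp only [sat, hE]
  exact forall_congr' fun ρ => imp_congr_right fun h0 => imp_congr_right fun hρ =>
    until_congr hS hφ hψ hρ (h0 ▸ hy)

end Congr

theorem atoms_finite (φ : QCTL AP) : φ.atoms.Finite := by
  induction φ with
  | atom p => exact Set.finite_singleton p
  | qneg _ ih | qEX _ ih => exact ih
  | qor _ _ ih₁ ih₂ | qEU _ _ ih₁ ih₂ | qAU _ _ ih₁ ih₂ => exact ih₁.union ih₂
  | qexi p _ ih => exact ih.insert p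

theorem qsize_exiMany (l : List AP) (φ : QCTL AP) :
    (exiMany l φ).qsize = l.length + φ.qsize := by
  induction l with
  | nil => simp [exiMany]
  | cons p l ih =>
    simp only [exiMany, List.foldr_cons, qsize, List.length_cons] at ih ⊢
    omega

theorem qsize_conjList (L : List (QCTL AP)) (b : QCTL AP) :
    (conjList L b).qsize = (L.map fun φ => φ.qsize + 4).sum + b.qsize := by
  induction L with
  | nil => simp [conjList]
  | cons φ L ih =>
    simp only [conjList, List.foldr_cons, qand, qsize, List.map_cons, List.sum_cons] at ih ⊢
    omega

end QCTL

theorem BoolAtoms.boolCombBasic {φ : QCTL AP} (h : BoolAtoms φ) : BoolCombBasic φ := by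
  induction h with
  | atom p => exact .atom p
  | qneg _ ih => exact .qneg ih
  | qor _ _ ih₁ ih₂ => exact .qor ih₁ ih₂

/-- A fresh proposition `atom` with its defining basic formula `body`; `named` is the CTL
subformula that `atom` stands for, recorded only for the correctness proof. -/
structure FlatDef (AP : Type) where
  atom : AP
  body : QCTL AP
  named : QCTL AP

namespace FlatDef

def clause [Inhabited AP] (d : FlatDef AP) : QCTL AP :=
  QCTL.qAG (QCTL.qiff (QCTL.atom d.atom) d.body)

def Holds (K' : Kripke AP V) (S : Set V) (d : FlatDef AP) : Prop :=
  ∀ y ∈ S, d.atom ∈ K'.label y ↔ d.body.sat K' y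

def Names (K K' : Kripke AP V) (S : Set V) (d : FlatDef AP) : Prop :=
  ∀ y ∈ S, d.atom ∈ K'.label y ↔ d.named.sat K y

theorem holds_iff_names {K K' : Kripke AP V} {S : Set V} {d : FlatDef AP}
    (h : ∀ y ∈ S, d.body.sat K' y ↔ d.named.sat K y) : d.Holds K' S ↔ d.Names K K' S :=
  forall₂_congr fun y hy => by rw [h y hy]

theorem sat_clause [Inhabited AP] {K : Kripke AP V} {x : V} {d : FlatDef AP} :
    d.clause.sat K x ↔ d.Holds K {y | Relation.ReflTransGen K.E x y} := by
  simp only [clause, QCTL.sat_qAG, QCTL.sat_qiff, QCTL.sat, Holds, Set.mem_ofPred_eq]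

theorem qsize_clause [Inhabited AP] (d : FlatDef AP) : d.clause.qsize = 2 * d.body.qsize + 17 := by
  simp only [clause, QCTL.qAG, QCTL.qEF, QCTL.qiff, QCTL.qand, QCTL.qimp, QCTL.qtop, QCTL.qsize]
  omega

end FlatDef

namespace QCTL

/-- `flatten f φ n = (Φ₀, L)`: the definitions in `L` use the fresh propositions `f n`,
`f (n + 1)`, … in this order. Quantifiers do not occur in CTL formulas and are not translated. -/
def flatten (f : ℕ → AP) : QCTL AP → ℕ → QCTL AP × List (FlatDef AP)
  | atom p, _ => (atom p, [])
  | qneg φ, n => let r := flatten f φ n; (qneg r.1, r.2)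
  | qor φ ψ, n =>
    let r := flatten f φ n
    let s := flatten f ψ (n + r.2.length)
    (qor r.1 s.1, r.2 ++ s.2)
  | qEX φ, n =>
    let r := flatten f φ n
    let κ := f (n + r.2.length)
    (atom κ, r.2 ++ [⟨κ, qEX r.1, qEX φ⟩])
  | qEU φ ψ, n =>
    let r := flatten f φ n
    let s := flatten f ψ (n + r.2.length)
    let κ := f (n + r.2.length + s.2.length)
    (atom κ, r.2 ++ s.2 ++ [⟨κ, qEU r.1 s.1, qEU φ ψ⟩])
  | qAU φ ψ, n =>
    let r := flatten f φ n
    let s := flatten f ψ (n + r.2.length)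
    let κ := f (n + r.2.length + s.2.length)
    (atom κ, r.2 ++ s.2 ++ [⟨κ, qAU r.1 s.1, qAU φ ψ⟩])
  | qexi p _, _ => (atom p, [])

section Shape

variable (f : ℕ → AP)

theorem flatten_map_atom (φ : QCTL AP) (n : ℕ) :
    (flatten f φ n).2.map FlatDef.atom = (List.range' n (flatten f φ n).2.length).map f := by
  induction φ generalizing n with
  | atom p | qexi p φ _ => rfl
  | qneg φ ih => exact ih n
  | qor φ ψ ih₁ ih₂ =>
    simp only [flatten, List.map_append, ih₁, ih₂, List.length_append, ← List.range'_append_1]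
  | qEX φ ih =>
    simp only [flatten, List.map_append, ih, List.length_append, List.length_singleton,
      List.range'_1_concat, List.map_cons, List.map_nil]
  | qEU φ ψ ih₁ ih₂ | qAU φ ψ ih₁ ih₂ =>
    simp only [flatten, List.map_append, ih₁, ih₂, List.length_append, List.length_singleton,
      List.range'_1_concat, ← List.range'_append_1, List.map_cons, List.map_nil, Nat.add_assoc,
      List.append_assoc]

theorem flatten_boolAtoms (φ : QCTL AP) (n : ℕ) : BoolAtoms (flatten f φ n).1 := by
  induction φ generalizing n with
  | atom p | qexi p _ _ => exact .atom p
  | qneg φ ih => exact .qneg (ih n)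
  | qor φ ψ ih₁ ih₂ => exact .qor (ih₁ n) (ih₂ _)
  | qEX | qEU | qAU => exact .atom _

theorem flatten_basicCTL (φ : QCTL AP) (n : ℕ) : ∀ d ∈ (flatten f φ n).2, BasicCTL d.body := by
  induction φ generalizing n with
  | atom p | qexi p _ _ => simp [flatten]
  | qneg φ ih => exact ih n
  | qor φ ψ ih₁ ih₂ => simpa [flatten, or_imp, forall_and] using ⟨ih₁ n, ih₂ _⟩
  | qEX φ ih => simpa [flatten, or_imp, forall_and] using ⟨ih n, .qEX (flatten_boolAtoms f φ n)⟩
  | qEU φ ψ ih₁ ih₂ =>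
    simpa [flatten, or_imp, forall_and] using
      ⟨ih₁ n, ih₂ _, .qEU (flatten_boolAtoms f φ n) (flatten_boolAtoms f ψ _)⟩
  | qAU φ ψ ih₁ ih₂ =>
    simpa [flatten, or_imp, forall_and] using
      ⟨ih₁ n, ih₂ _, .qAU (flatten_boolAtoms f φ n) (flatten_boolAtoms f ψ _)⟩

theorem flatten_length_le (φ : QCTL AP) (n : ℕ) : (flatten f φ n).2.length ≤ φ.qsize := by
  induction φ generalizing n with
  | atom p | qexi p _ _ => simp [flatten]
  | qneg φ ih => exact (ih n).trans (Nat.le_succ _)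
  | qor φ ψ ih₁ ih₂ | qEU φ ψ ih₁ ih₂ | qAU φ ψ ih₁ ih₂ =>
    have := ih₁ n; have := ih₂ (n + (flatten f φ n).2.length)
    simp only [flatten, List.length_append, List.length_singleton, qsize]
    omega
  | qEX φ ih =>
    have := ih n
    simp only [flatten, List.length_append, List.length_singleton, qsize]
    omega

theorem flatten_size_le (φ : QCTL AP) (n : ℕ) :
    ((flatten f φ n).2.map fun d => d.body.qsize).sum + (flatten f φ n).1.qsize ≤ 2 * φ.qsize := by
  induction φ generalizing n with
  | atom p => simp [flatten, qsize]
  | qexi p φ _ => simp only [flatten, qsize, List.map_nil, List.sum_nil]; omega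
  | qneg φ ih => have := ih n; simp only [flatten, qsize]; omega
  | qor φ ψ ih₁ ih₂ | qEU φ ψ ih₁ ih₂ | qAU φ ψ ih₁ ih₂ =>
    have := ih₁ n; have := ih₂ (n + (flatten f φ n).2.length)
    simp only [flatten, List.map_append, List.sum_append, List.map_cons, List.map_nil,
      List.sum_cons, List.sum_nil, qsize]
    omega
  | qEX φ ih =>
    have := ih n
    simp only [flatten, List.map_append, List.sum_append, List.map_cons, List.map_nil,
      List.sum_cons, List.sum_nil, qsize]
    omega

end Shape

section Correctness

variable {f : ℕ → AP} {K K' : Kripke AP V} {S : Set V}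

theorem flatten_sat_iff_of_names {φ : QCTL AP} (hφ : φ.quantFree)
    (hagree : ∀ q ∈ φ.atoms, ∀ y, q ∈ K'.label y ↔ q ∈ K.label y) (n : ℕ)
    (hnames : ∀ d ∈ (flatten f φ n).2, d.Names K K' S) :
    ∀ y ∈ S, (flatten f φ n).1.sat K' y ↔ φ.sat K y := by
  induction φ generalizing n with
  | atom p => exact fun y _ => hagree p rfl y
  | qneg φ ih => exact fun y hy => not_congr (ih hφ hagree n hnames y hy)
  | qor φ ψ ih₁ ih₂ =>
    simp only [flatten, List.forall_mem_append] at hnames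
    exact fun y hy => or_congr
      (ih₁ hφ.1 (fun q hq => hagree q (.inl hq)) n hnames.1 y hy)
      (ih₂ hφ.2 (fun q hq => hagree q (.inr hq)) _ hnames.2 y hy)
  | qEX | qEU | qAU =>
    simp only [flatten, List.forall_mem_append, List.forall_mem_singleton] at hnames
    exact hnames.2
  | qexi => exact absurd hφ id

theorem flatten_holds_iff_names (hE : K'.E = K.E) (hS : ∀ ⦃y z⦄, y ∈ S → K.E y z → z ∈ S)
    {φ : QCTL AP} (hφ : φ.quantFree)
    (hagree : ∀ q ∈ φ.atoms, ∀ y, q ∈ K'.label y ↔ q ∈ K.label y) (n : ℕ) :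
    (∀ d ∈ (flatten f φ n).2, d.Holds K' S) ↔ ∀ d ∈ (flatten f φ n).2, d.Names K K' S := by
  induction φ generalizing n with
  | atom | qexi => simp [flatten]
  | qneg φ ih => exact ih hφ hagree n
  | qor φ ψ ih₁ ih₂ =>
    simp only [flatten, List.forall_mem_append]
    exact and_congr (ih₁ hφ.1 (fun q hq => hagree q (.inl hq)) n)
      (ih₂ hφ.2 (fun q hq => hagree q (.inr hq)) _)
  | qEX φ ih =>
    simp only [flatten, List.forall_mem_append, List.forall_mem_singleton]
    rw [ih hφ hagree n]
    exact and_congr_right fun h => FlatDef.holds_iff_names <|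
      sat_qEX_congr hE hS (flatten_sat_iff_of_names (φ := φ) hφ hagree n h)
  | qEU φ ψ ih₁ ih₂ | qAU φ ψ ih₁ ih₂ =>
    have hagree₁ : ∀ q ∈ φ.atoms, ∀ y, _ := fun q hq => hagree q (.inl hq)
    have hagree₂ : ∀ q ∈ ψ.atoms, ∀ y, _ := fun q hq => hagree q (.inr hq)
    simp only [flatten, List.forall_mem_append, List.forall_mem_singleton]
    rw [ih₁ hφ.1 hagree₁ n, ih₂ hφ.2 hagree₂ _]
    refine and_congr_right fun h => FlatDef.holds_iff_names ?_
    first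
    | exact sat_qEU_congr hE hS (flatten_sat_iff_of_names hφ.1 hagree₁ n h.1)
        (flatten_sat_iff_of_names hφ.2 hagree₂ _ h.2)
    | exact sat_qAU_congr hE hS (flatten_sat_iff_of_names hφ.1 hagree₁ n h.1)
        (flatten_sat_iff_of_names hφ.2 hagree₂ _ h.2)

end Correctness

theorem flatten_atom_notMem {f : ℕ → AP} {A : Set AP} (hf : ∀ k, f k ∉ A) {φ : QCTL AP}
    {n : ℕ} {d : FlatDef AP} (hd : d ∈ (flatten f φ n).2) : d.atom ∉ A := by
  have hmem : d.atom ∈ (flatten f φ n).2.map FlatDef.atom := List.mem_map_of_mem hd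
  rw [flatten_map_atom] at hmem
  obtain ⟨k, -, hk⟩ := List.mem_map.1 hmem
  exact hk ▸ hf k

theorem nodup_flatten_map_atom {f : ℕ → AP} (hf : Function.Injective f) (φ : QCTL AP) (n : ℕ) :
    ((flatten f φ n).2.map FlatDef.atom).Nodup := by
  rw [flatten_map_atom]
  exact (List.nodup_range' ..).map hf

variable [Inhabited AP]

def flatFormula (f : ℕ → AP) (φ : QCTL AP) (n : ℕ) : QCTL AP :=
  exiMany ((flatten f φ n).2.map FlatDef.atom)
    (conjList ((flatten f φ n).2.map FlatDef.clause) (flatten f φ n).1)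

theorem qEquiv_flatFormula {f : ℕ → AP} (hf : Function.Injective f) {Φ : QCTL AP}
    (hfresh : ∀ k, f k ∉ Φ.atoms) (hΦ : Φ.quantFree) (n : ℕ) :
    QEquiv Φ (flatFormula f Φ n) := by
  intro W _ K x
  set L := (flatten f Φ n).2
  have hagree : ∀ K' : Kripke AP W, K.AgreeOutside K' {q | q ∈ L.map FlatDef.atom} →
      ∀ q ∈ Φ.atoms, ∀ y, q ∈ K'.label y ↔ q ∈ K.label y := by
    rintro K' ⟨-, hlabel⟩ q hq y
    refine hlabel y q fun hqL => ?_
    obtain ⟨d, hd, rfl⟩ := List.mem_map.1 hqL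
    exact flatten_atom_notMem hfresh hd hq
  simp only [flatFormula, sat_exiMany, sat_conjList, List.forall_mem_map, FlatDef.sat_clause]
  constructor
  · intro hsat
    obtain ⟨K', hK', hlabel⟩ := K.exists_relabel {q | q ∈ L.map FlatDef.atom}
      fun q v => ∃ d ∈ L, d.atom = q ∧ d.named.sat K v
    have hnames : ∀ d ∈ L, d.Names K K' Set.univ := by
      intro d hd y _
      rw [hlabel _ (List.mem_map_of_mem hd) y]
      refine ⟨fun ⟨d', hd', hdd', h⟩ => ?_, fun h => ⟨d, hd, rfl, h⟩⟩
      rwa [List.inj_on_of_nodup_map (nodup_flatten_map_atom hf Φ n) hd' hd hdd'] at h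
    have hholds := (flatten_holds_iff_names hK'.1 (fun _ _ _ _ => trivial) hΦ
      (hagree K' hK') n).2 hnames
    exact ⟨K', hK', fun d hd y _ => hholds d hd y trivial,
      (flatten_sat_iff_of_names hΦ (hagree K' hK') n hnames x trivial).2 hsat⟩
  · rintro ⟨K', hK', hholds, hsat⟩
    rw [hK'.1] at hholds
    have hnames := (flatten_holds_iff_names hK'.1 (fun _ _ hy hyz => hy.tail hyz) hΦ
      (hagree K' hK') n).1 hholds
    exact (flatten_sat_iff_of_names hΦ (hagree K' hK') n hnames x .refl).1 hsat

theorem qsize_flatFormula_le (f : ℕ → AP) (Φ : QCTL AP) (n : ℕ) :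
    (flatFormula f Φ n).qsize ≤ 26 * Φ.qsize := by
  have hlength := flatten_length_le f Φ n
  have hsize := flatten_size_le f Φ n
  simp only [flatFormula, qsize_exiMany, qsize_conjList, List.length_map, List.map_map,
    Function.comp_def, FlatDef.qsize_clause, List.sum_map_add, List.sum_map_mul_left,
    List.map_const', List.sum_replicate, smul_eq_mul]
  omega

end QCTL

/-- Flattening of CTL: any CTL formula `Φ` is equivalent to a QCTL formula
`Ψ = ∃κ₁…κₘ.( Φ₀ ∧ ⋀ᵢ AG(κᵢ ↔ θᵢ) )` where the `κᵢ` are fresh, `Φ₀` is a Boolean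
combination of basic CTL formulas, every `θᵢ` is a basic CTL formula, and `|Ψ| ∈ O(|Φ|)`. -/
theorem flatten_ctl {AP : Type} [Inhabited AP] [Infinite AP] :
    ∃ C : ℕ, ∀ Φ : QCTL AP, Φ.quantFree →
      ∃ (m : ℕ) (κ : Fin m → AP) (Φ0 : QCTL AP) (θ : Fin m → QCTL AP),
        Function.Injective κ ∧ (∀ i, κ i ∉ Φ.atoms) ∧
        BoolCombBasic Φ0 ∧ (∀ i, BasicCTL (θ i)) ∧
        QEquiv Φ (exiMany ((List.finRange m).map κ) (flatBody m κ Φ0 θ)) ∧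
        (exiMany ((List.finRange m).map κ) (flatBody m κ Φ0 θ)).qsize ≤ C * Φ.qsize := by
  refine ⟨26, fun Φ hΦ => ?_⟩
  obtain ⟨f, hf, hfresh⟩ := (QCTL.atoms_finite Φ).exists_injective_nat_notMem
  set L := (QCTL.flatten f Φ 0).2
  have hΨ : exiMany ((List.finRange L.length).map fun i => L[i].atom)
      (flatBody L.length (fun i => L[i].atom) (QCTL.flatten f Φ 0).1 fun i => L[i].body) =
      QCTL.flatFormula f Φ 0 := by
    show _ = exiMany (L.map FlatDef.atom) (conjList (L.map FlatDef.clause) _)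
    rw [flatBody, ← List.map_fun_getElem_finRange L FlatDef.atom,
      ← List.map_fun_getElem_finRange L FlatDef.clause]
    rfl
  refine ⟨L.length, fun i => L[i].atom, (QCTL.flatten f Φ 0).1, fun i => L[i].body,
    fun i j hij => Fin.ext ?_, fun i => QCTL.flatten_atom_notMem hfresh (List.getElem_mem _),
    (QCTL.flatten_boolAtoms f Φ 0).boolCombBasic,
    fun i => QCTL.flatten_basicCTL f Φ 0 _ (List.getElem_mem _),
    hΨ ▸ QCTL.qEquiv_flatFormula hf hfresh hΦ 0, hΨ ▸ QCTL.qsize_flatFormula_le f Φ 0⟩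
  have hnodup : (L.map FlatDef.atom).Nodup := QCTL.nodup_flatten_map_atom hf Φ 0
  exact (hnodup.getElem_inj_iff (hi := by simp) (hj := by simp)).1 (by simpa using hij)
end
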